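/- arXiv:2211.01057 — 4 statements merged into one kernel-verified Lean document; each statement's English description precedes it below -/
import Mathlib

section
/- For every n ≥ 2, the graph NO⁺(2n,2) is a strongly regular graph with parameters v = 2^(2n-1) − 2^(n-1), k = 2^(2n-2) − 1, λ = 2^(2n-3) − 2, μ = 2^(2n-3) + 2^(n-2). -/
/-!
Let `χ(a) = (-1)^a` on `𝔽₂` and let `Q` be a quadratic form on a finite `𝔽₂`-space `V` whose
polar form `B` is nondegenerate. The number of `x` with `Q x = 1` and `B(u,x) = B(v,x) = 0` is
`⅛ ∑ₓ (1 - χ(Q x)) (1 + χ(B(u,x))) (1 + χ(B(v,x)))`, which expands into a sum over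
`w ∈ {0, u, v, u + v}` of `∑ₓ χ(B(w,x)) - ∑ₓ χ(Q x + B(w,x))`. The first sum is `|V|` or `0`
according as `w = 0` or not, and the second is `χ(Q w) S` with `S = ∑ₓ χ(Q x)`, because
`Q x + B(w,x) = Q(x + w) + Q w`. Taking `(u, v)` to be `(0, 0)`, `(u, u)` and a pair of distinct
vertices yields the number of vertices, the valency, and `λ`, `μ` in terms of `|V|` and `S`.
The hyperbolic form on `𝔽₂^(2n)` is an orthogonal sum of `n` hyperbolic planes, each contributing
a factor `2` to `S`, so `S = 2^n`.
-/

open scoped Classical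

/-- The hyperbolic quadratic form `Q(x) = x₁x₂ + x₃x₄ + ⋯ + x_{2n-1}x_{2n}`
on `GF(2)^(2n)`. -/
def hypQ (n : ℕ) (x : Fin (2 * n) → ZMod 2) : ZMod 2 :=
  ∑ i : Fin n, x ⟨2 * i.val, by omega⟩ * x ⟨2 * i.val + 1, by omega⟩

/-- The graph `NO⁺(2n,2)`: vertices are the vectors `v ∈ GF(2)^(2n)` with `Q(v) = 1`,
and two distinct vertices `u, v` are adjacent iff `Q(u + v) = 0`. -/
noncomputable def NOplus (n : ℕ) :
    SimpleGraph {v : Fin (2 * n) → ZMod 2 // hypQ n v = 1} where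
  Adj u v := u ≠ v ∧ hypQ n (u.1 + v.1) = 0
  symm := ⟨fun u v h => ⟨h.1.symm, by rw [add_comm]; exact h.2⟩⟩
  loopless := ⟨fun u h => h.1 rfl⟩

open Finset QuadraticMap

def signChar : AddChar (ZMod 2) ℤ := AddChar.zmodChar 2 (ζ := -1) (by norm_num)

lemma signChar_zero : signChar 0 = 1 := rfl

lemma signChar_one : signChar 1 = -1 := rfl

lemma signChar_of_ne_zero {a : ZMod 2} (ha : a ≠ 0) : signChar a = -1 := by
  revert a; decide

/- The expansion of `(1 - signChar q) (1 + signChar a) (1 + signChar b)`. -/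
lemma eight_mul_indicator_eq (q a b : ZMod 2) :
    8 * (if q = 1 ∧ a = 0 ∧ b = 0 then 1 else 0 : ℤ) =
      (signChar 0 - signChar (q + 0)) + (signChar a - signChar (q + a))
        + (signChar b - signChar (q + b)) + (signChar (a + b) - signChar (q + (a + b))) := by
  revert q a b; decide

lemma AddChar.map_sum_eq_prod {ι A M : Type*} [AddCommMonoid A] [CommMonoid M]
    (ψ : AddChar A M) (s : Finset ι) (f : ι → A) : ψ (∑ i ∈ s, f i) = ∏ i ∈ s, ψ (f i) := by
  induction s using Finset.cons_induction with
  | empty => simp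
  | cons a s ha ih => rw [sum_cons, prod_cons, AddChar.map_add_eq_mul, ih]

lemma card_set_subtype_eq {V : Type*} [Fintype V] {p : V → Prop} (s : Set (Subtype p))
    [Fintype s] {t : Finset V} (h : ∀ x, x ∈ t ↔ ∃ hx : p x, ⟨x, hx⟩ ∈ s) :
    Fintype.card s = #t := by
  rw [← Set.toFinset_card, ← card_map (Function.Embedding.subtype p)]
  congr 1
  ext x
  simp [h]

def nonsingularGraph {V : Type*} [AddCommMagma V] (f : V → ZMod 2) :
    SimpleGraph {v // f v = 1} where
  Adj u v := u ≠ v ∧ f (u.1 + v.1) = 0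
  symm := ⟨fun _ _ h => ⟨h.1.symm, by rw [add_comm]; exact h.2⟩⟩
  loopless := ⟨fun _ h => h.1 rfl⟩

namespace QuadraticForm

variable {V : Type*} [AddCommGroup V] [Module (ZMod 2) V] {Q : QuadraticForm (ZMod 2) V}

variable (Q) in
lemma polar_self_eq_zero (x : V) : polar Q x x = 0 := by
  rw [polar_self, two_nsmul, ZModModule.add_self]

lemma map_add_of_eq_one {u v : V} (hu : Q u = 1) (hv : Q v = 1) : Q (u + v) = polar Q u v := by
  rw [QuadraticMap.map_add (⇑Q), hu, hv, ZModModule.add_self, zero_add]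

lemma nonsingularGraph_adj_iff {u w : {v // Q v = 1}} :
    (nonsingularGraph Q).Adj u w ↔ u ≠ w ∧ polar Q u w = 0 := by
  rw [← map_add_of_eq_one u.2 w.2]
  rfl

variable [Fintype V]

variable (Q) in
def gaussSum : ℤ := ∑ x, signChar (Q x)

variable (Q) in
def polarCharSum (w : V) : ℤ := ∑ x, (signChar (polar Q w x) - signChar (Q x + polar Q w x))

lemma sum_signChar_add_polar (w : V) :
    ∑ x, signChar (Q x + polar Q w x) = signChar (Q w) * Q.gaussSum := by
  have h (x : V) : Q x + polar Q w x = Q (w + x) + Q w := by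
    rw [polar, ZModModule.sub_eq_add, ZModModule.sub_eq_add, add_left_comm, ZModModule.add_self,
      add_zero]
  simp_rw [h, AddChar.map_add_eq_mul, ← sum_mul, gaussSum, mul_comm]
  exact congrArg _ (Fintype.sum_equiv (Equiv.addLeft w) _ _ fun _ => rfl)

variable (Q) in
lemma eight_mul_card_polar_eq_zero (u v : V) :
    8 * (#{x | Q x = 1 ∧ polar Q u x = 0 ∧ polar Q v x = 0} : ℤ) =
      Q.polarCharSum 0 + Q.polarCharSum u + Q.polarCharSum v + Q.polarCharSum (u + v) := by
  simp only [natCast_card_filter, mul_sum, polarCharSum, ← sum_add_distrib]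
  refine sum_congr rfl fun x _ => ?_
  rw [eight_mul_indicator_eq, polar_zero_left, polar_add_left]

variable (hQ : (polarBilin Q).SeparatingLeft)
include hQ

lemma sum_signChar_polar (w : V) :
    ∑ x, signChar (polar Q w x) = if w = 0 then (Fintype.card V : ℤ) else 0 := by
  split_ifs with hw
  · simp [hw]
  · obtain ⟨x, hx⟩ : ∃ x, polar Q w x ≠ 0 := by
      by_contra! h
      exact hw (hQ w h)
    refine AddChar.sum_eq_zero_of_ne_one
      (ψ := signChar.compAddMonoidHom (polarBilin Q w).toAddMonoidHom) ?_
    exact AddChar.ne_one_iff.2 ⟨x, show signChar (polar Q w x) ≠ 1 by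
      rw [signChar_of_ne_zero hx]; decide⟩

lemma polarCharSum_eq (w : V) :
    Q.polarCharSum w =
      (if w = 0 then (Fintype.card V : ℤ) else 0) - signChar (Q w) * Q.gaussSum := by
  rw [polarCharSum, sum_sub_distrib, sum_signChar_polar hQ, sum_signChar_add_polar]

lemma two_mul_card_eq_one : 2 * (#{x | Q x = 1} : ℤ) = Fintype.card V - Q.gaussSum := by
  have h := Q.eight_mul_card_polar_eq_zero 0 0
  simp only [polar_zero_left, and_true, add_zero, polarCharSum_eq hQ, map_zero, signChar_zero,
    ↓reduceIte] at h
  linarith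

lemma four_mul_card_polar_eq_zero {u : V} (hu : Q u = 1) :
    4 * (#{x | Q x = 1 ∧ polar Q u x = 0} : ℤ) = Fintype.card V := by
  have hu0 : u ≠ 0 := by rintro rfl; simp at hu
  have h := Q.eight_mul_card_polar_eq_zero u u
  simp only [and_self, ZModModule.add_self, polarCharSum_eq hQ, map_zero, signChar_zero, hu, hu0,
    signChar_one, ↓reduceIte] at h
  linarith

lemma eight_mul_card_polar_eq_zero_of_ne {u v : V} (hu : Q u = 1) (hv : Q v = 1) (huv : u ≠ v) :
    8 * (#{x | Q x = 1 ∧ polar Q u x = 0 ∧ polar Q v x = 0} : ℤ) =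
      Fintype.card V + Q.gaussSum - signChar (polar Q u v) * Q.gaussSum := by
  have hu0 : u ≠ 0 := by rintro rfl; simp at hu
  have hv0 : v ≠ 0 := by rintro rfl; simp at hv
  have huv0 : u + v ≠ 0 := by rwa [Ne, ← ZModModule.sub_eq_add, sub_eq_zero]
  rw [eight_mul_card_polar_eq_zero, polarCharSum_eq hQ, polarCharSum_eq hQ, polarCharSum_eq hQ,
    polarCharSum_eq hQ, map_add_of_eq_one hu hv]
  simp only [hu, hv, hu0, hv0, huv0, map_zero, signChar_zero, signChar_one, ↓reduceIte]
  ring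

lemma four_mul_nonsingularGraph_degree_add_one (u : {v // Q v = 1}) :
    4 * ((nonsingularGraph Q).degree u + 1 : ℤ) = Fintype.card V := by
  set t : Finset V := {x | Q x = 1 ∧ polar Q u x = 0}
  have hu : u.1 ∈ t := by
    simp only [t, mem_filter, mem_univ, true_and]
    exact ⟨u.2, polar_self_eq_zero Q u⟩
  rw [← SimpleGraph.card_neighborSet_eq_degree, card_set_subtype_eq _ (t := t.erase u),
    ← four_mul_card_polar_eq_zero hQ u.2, ← card_erase_add_one hu]
  · push_cast
    ring
  · intro x
    simp [t, nonsingularGraph_adj_iff, Subtype.ext_iff, @eq_comm _ x]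

lemma eight_mul_card_commonNeighbors_add_two_of_adj {u w : {v // Q v = 1}}
    (h : (nonsingularGraph Q).Adj u w) :
    8 * (Fintype.card ((nonsingularGraph Q).commonNeighbors u w) + 2 : ℤ) = Fintype.card V := by
  obtain ⟨huw, hp⟩ := nonsingularGraph_adj_iff.1 h
  set t : Finset V := {x | Q x = 1 ∧ polar Q u x = 0 ∧ polar Q w x = 0}
  have hu : u.1 ∈ t := by
    simp only [t, mem_filter, mem_univ, true_and]
    exact ⟨u.2, polar_self_eq_zero Q u, polar_comm Q w u ▸ hp⟩
  have hw : w.1 ∈ t.erase u := by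
    simp only [t, mem_erase, mem_filter, mem_univ, true_and]
    exact ⟨Subtype.coe_ne_coe.2 huw.symm, w.2, hp, polar_self_eq_zero Q w⟩
  have ht := eight_mul_card_polar_eq_zero_of_ne hQ u.2 w.2 (Subtype.coe_ne_coe.2 huw)
  rw [hp, signChar_zero, one_mul, add_sub_cancel_right] at ht
  rw [card_set_subtype_eq _ (t := (t.erase u).erase w), ← ht]
  · rw [← card_erase_add_one hu, ← card_erase_add_one hw]
    push_cast
    ring
  · intro x
    simp only [t, SimpleGraph.mem_commonNeighbors, nonsingularGraph_adj_iff, Subtype.ext_iff,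
      mem_erase, mem_filter, mem_univ, true_and, ne_eq, exists_and_left, exists_prop]
    tauto

lemma eight_mul_card_commonNeighbors_of_not_adj {u w : {v // Q v = 1}} (huw : u ≠ w)
    (h : ¬(nonsingularGraph Q).Adj u w) :
    8 * (Fintype.card ((nonsingularGraph Q).commonNeighbors u w) : ℤ) =
      Fintype.card V + 2 * Q.gaussSum := by
  have hp : polar Q u w ≠ 0 := fun hp => h (nonsingularGraph_adj_iff.2 ⟨huw, hp⟩)
  have ht := eight_mul_card_polar_eq_zero_of_ne hQ u.2 w.2 (Subtype.coe_ne_coe.2 huw)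
  rw [signChar_of_ne_zero hp] at ht
  rw [card_set_subtype_eq _ (t := {x | Q x = 1 ∧ polar Q u x = 0 ∧ polar Q w x = 0}), ht]
  · ring
  · intro x
    simp only [SimpleGraph.mem_commonNeighbors, nonsingularGraph_adj_iff, Subtype.ext_iff,
      mem_filter, mem_univ, true_and, ne_eq, exists_and_left, exists_prop]
    constructor
    · rintro ⟨hx, hux, hwx⟩
      refine ⟨⟨?_, hux⟩, ?_, hx, hwx⟩ <;> rintro rfl
      · exact hp (polar_comm Q _ _ ▸ hwx)
      · exact hp hux
    · tauto

theorem isSRGWith_nonsingularGraph {v k ℓ μ : ℕ}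
    (hv : 2 * (v : ℤ) = Fintype.card V - Q.gaussSum) (hk : 4 * ((k : ℤ) + 1) = Fintype.card V)
    (hℓ : 8 * ((ℓ : ℤ) + 2) = Fintype.card V)
    (hμ : 8 * (μ : ℤ) = Fintype.card V + 2 * Q.gaussSum) :
    (nonsingularGraph Q).IsSRGWith v k ℓ μ where
  card := by
    have := two_mul_card_eq_one hQ
    rw [Fintype.card_subtype]
    omega
  regular u := by
    have := four_mul_nonsingularGraph_degree_add_one hQ u
    omega
  of_adj u w h := by
    have := eight_mul_card_commonNeighbors_add_two_of_adj hQ h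
    omega
  of_not_adj u w huw h := by
    have := eight_mul_card_commonNeighbors_of_not_adj hQ huw h
    omega

end QuadraticForm

def hypForm (n : ℕ) : QuadraticForm (ZMod 2) (Fin (2 * n) → ZMod 2) :=
  ∑ i : Fin n, proj ⟨2 * i.val, by omega⟩ ⟨2 * i.val + 1, by omega⟩

lemma coe_hypForm (n : ℕ) : ⇑(hypForm n) = hypQ n := by
  ext x
  simp [hypForm, hypQ]

def pairIndex (n : ℕ) : Fin n × Fin 2 ≃ Fin (2 * n) :=
  finProdFinEquiv.trans (finCongr (Nat.mul_comm n 2))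

def pairEquiv (n : ℕ) : (Fin n → Fin 2 → ZMod 2) ≃ₗ[ZMod 2] (Fin (2 * n) → ZMod 2) :=
  (LinearEquiv.curry (ZMod 2) (ZMod 2) (Fin n) (Fin 2)).symm ≪≫ₗ
    LinearEquiv.funCongrLeft (ZMod 2) (ZMod 2) (pairIndex n).symm

lemma pairEquiv_apply (n : ℕ) (y : Fin n → Fin 2 → ZMod 2) (i : Fin n) (b : Fin 2)
    (h : 2 * i.val + b.val < 2 * n) : pairEquiv n y ⟨2 * i + b, h⟩ = y i b := by
  have : (pairIndex n).symm ⟨2 * i + b, h⟩ = (i, b) := by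
    rw [Equiv.symm_apply_eq]
    ext
    simp [pairIndex, add_comm]
  simp [pairEquiv, LinearMap.funLeft, this]

lemma hypQ_pairEquiv (n : ℕ) (y : Fin n → Fin 2 → ZMod 2) :
    hypQ n (pairEquiv n y) = ∑ i, y i 0 * y i 1 :=
  sum_congr rfl fun i _ =>
    congr_arg₂ (· * ·) (pairEquiv_apply n y i 0 _) (pairEquiv_apply n y i 1 _)

lemma polar_hypQ_pairEquiv (n : ℕ) (y z : Fin n → Fin 2 → ZMod 2) :
    polar (hypQ n) (pairEquiv n y) (pairEquiv n z) = ∑ i, (y i 0 * z i 1 + y i 1 * z i 0) := by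
  simp only [polar, ← map_add, hypQ_pairEquiv, ← sum_sub_distrib, Pi.add_apply]
  exact sum_congr rfl fun i _ => by ring

lemma gaussSum_hypForm (n : ℕ) : (hypForm n).gaussSum = 2 ^ n := by
  rw [QuadraticForm.gaussSum, coe_hypForm, ← (pairEquiv n).toEquiv.sum_comp]
  simp only [LinearEquiv.coe_toEquiv, hypQ_pairEquiv, AddChar.map_sum_eq_prod]
  rw [← Fintype.prod_sum fun (_ : Fin n) (p : Fin 2 → ZMod 2) => signChar (p 0 * p 1)]
  have : ∑ p : Fin 2 → ZMod 2, signChar (p 0 * p 1) = 2 := by decide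
  simp [this]

lemma polar_hypQ_pairEquiv_single (n : ℕ) (y : Fin n → Fin 2 → ZMod 2) (i : Fin n)
    (p : Fin 2 → ZMod 2) :
    polar (hypQ n) (pairEquiv n y) (pairEquiv n (Pi.single i p)) = y i 0 * p 1 + y i 1 * p 0 := by
  rw [polar_hypQ_pairEquiv, Fintype.sum_eq_single i fun j hj => by simp [hj]]
  simp

lemma separatingLeft_polarBilin_hypForm (n : ℕ) : (polarBilin (hypForm n)).SeparatingLeft := by
  intro x hx
  obtain ⟨y, rfl⟩ := (pairEquiv n).surjective x
  simp only [polarBilin_apply_apply, coe_hypForm] at hx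
  rw [LinearEquiv.map_eq_zero_iff]
  ext i b
  fin_cases b
  · simpa [polar_hypQ_pairEquiv_single] using hx (pairEquiv n (Pi.single i ![0, 1]))
  · simpa [polar_hypQ_pairEquiv_single] using hx (pairEquiv n (Pi.single i ![1, 0]))

/-- For `n ≥ 2`, the graph `NO⁺(2n,2)` is strongly regular with parameters
`v = 2^(2n-1) − 2^(n-1)`, `k = 2^(2n-2) − 1`, `λ = 2^(2n-3) − 2`,
`μ = 2^(2n-3) + 2^(n-2)`. -/
theorem NOplus_isSRG (n : ℕ) (hn : 2 ≤ n) :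
    (NOplus n).IsSRGWith (2 ^ (2 * n - 1) - 2 ^ (n - 1)) (2 ^ (2 * n - 2) - 1)
      (2 ^ (2 * n - 3) - 2) (2 ^ (2 * n - 3) + 2 ^ (n - 2)) := by
  obtain ⟨m, rfl⟩ : ∃ m, n = m + 2 := ⟨n - 2, by omega⟩
  have hV : (Fintype.card (Fin (2 * (m + 2)) → ZMod 2) : ℤ) = 2 ^ (2 * m + 4) := by
    rw [Fintype.card_fun, ZMod.card, Fintype.card_fin]
    push_cast
    ring
  show (nonsingularGraph (hypQ (m + 2))).IsSRGWith _ _ _ _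
  rw [← coe_hypForm]
  apply QuadraticForm.isSRGWith_nonsingularGraph (separatingLeft_polarBilin_hypForm _) <;>
    simp only [hV, gaussSum_hypForm, show 2 * (m + 2) - 1 = 2 * m + 3 by omega,
      show 2 * (m + 2) - 2 = 2 * m + 2 by omega, show 2 * (m + 2) - 3 = 2 * m + 1 by omega,
      show m + 2 - 1 = m + 1 by omega, show m + 2 - 2 = m by omega]
  · rw [Nat.cast_sub (Nat.pow_le_pow_right two_pos (by omega))]
    push_cast
    ring
  · rw [Nat.cast_sub Nat.one_le_two_pow]
    push_cast
    ring
  · rw [Nat.cast_sub (Nat.le_self_pow (by omega) 2)]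
    push_cast
    ring
  · push_cast
    ring
end

section
/- The graphs NO⁺(6,2) and NM are isomorphic, i.e., there exists a graph isomorphism between the graph NO⁺(6,2) on the 28 non-isotropic points of a hyperbolic quadric in PG(5,2) and the graph NM on the 28 nonsingular symmetric 3×3 matrices over GF(2). -/
open scoped Classical

/-- The hyperbolic quadratic form `Q(x) = x₁x₂ + x₃x₄ + x₅x₆` on `GF(2)⁶`. -/
def hypQ6 (x : Fin 6 → ZMod 2) : ZMod 2 :=
  x 0 * x 1 + x 2 * x 3 + x 4 * x 5

/-- The graph `NO⁺(6,2)`: vertices are the vectors `v ∈ GF(2)⁶` with `Q(v) = 1`,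
and two distinct vertices `u, v` are adjacent iff `Q(u + v) = 0`. -/
noncomputable def NO6 : SimpleGraph {v : Fin 6 → ZMod 2 // hypQ6 v = 1} where
  Adj u v := u ≠ v ∧ hypQ6 (u.1 + v.1) = 0
  symm := ⟨fun u v h => ⟨h.1.symm, by rw [add_comm]; exact h.2⟩⟩
  loopless := ⟨fun u h => h.1 rfl⟩

/-- The graph `NM`: vertices are the symmetric `3 × 3` matrices over `GF(2)` with nonzero
determinant; two distinct vertices are adjacent iff their sum is singular. -/
noncomputable def NM :
    SimpleGraph {M : Matrix (Fin 3) (Fin 3) (ZMod 2) // M.IsSymm ∧ M.det ≠ 0} where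
  Adj A B := A ≠ B ∧ (A.1 + B.1).det = 0
  symm := ⟨fun A B h => ⟨h.1.symm, by rw [add_comm]; exact h.2⟩⟩
  loopless := ⟨fun A h => h.1 rfl⟩

/-!
Write a symmetric matrix `A` over `GF(2)` as its diagonal `d` together with its off-diagonal part
`c = (A₁₂, A₀₂, A₀₁)`. Since `x² = x` and `2 = 0`, its determinant is `d₀d₁d₂ + d · c`, so with
`d^♯ = (d₁d₂, d₀d₂, d₀d₁)` (note `d · d^♯ = 3 d₀d₁d₂ = d₀d₁d₂`) the coordinates
`φ A = (d, c + d^♯)`, paired off as in `Q`, satisfy `Q (φ A) = det A`. The cubic terms even cancel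
in sums: expanding `∏ (x + y)` gives `Q (φ A + φ B) = det (A + B)` for all symmetric `A`, `B`.
As `φ` is a bijection from symmetric matrices onto `GF(2)⁶`, its inverse is a graph isomorphism.
-/

open Matrix

theorem Matrix.det_fin_three_of_isSymm_of_charTwo {R : Type*} [CommRing R] [CharP R 2]
    {A : Matrix (Fin 3) (Fin 3) R} (hA : A.IsSymm) :
    A.det = A 0 0 * A 1 1 * A 2 2 + A 0 0 * A 1 2 ^ 2 + A 1 1 * A 0 2 ^ 2
      + A 2 2 * A 0 1 ^ 2 := by
  rw [det_fin_three, hA.apply 0 1, hA.apply 0 2, hA.apply 1 2]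
  linear_combination (A 0 1 * A 0 2 * A 1 2 - A 0 0 * A 1 2 ^ 2 - A 1 1 * A 0 2 ^ 2
    - A 2 2 * A 0 1 ^ 2) * CharTwo.two_eq_zero (R := R)

/-- The map `φ` of the header, with `d` and `c + d^♯` interleaved as in `hypQ6`. -/
def symmCoords (A : Matrix (Fin 3) (Fin 3) (ZMod 2)) : Fin 6 → ZMod 2 :=
  ![A 0 0, A 1 2 + A 1 1 * A 2 2, A 1 1, A 0 2 + A 0 0 * A 2 2, A 2 2, A 0 1 + A 0 0 * A 1 1]

def coordsSymm (x : Fin 6 → ZMod 2) : Matrix (Fin 3) (Fin 3) (ZMod 2) :=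
  !![x 0, x 5 + x 0 * x 2, x 3 + x 0 * x 4;
     x 5 + x 0 * x 2, x 2, x 1 + x 2 * x 4;
     x 3 + x 0 * x 4, x 1 + x 2 * x 4, x 4]

theorem isSymm_coordsSymm (x : Fin 6 → ZMod 2) : (coordsSymm x).IsSymm := by
  ext i j
  fin_cases i <;> fin_cases j <;> rfl

theorem symmCoords_coordsSymm (x : Fin 6 → ZMod 2) : symmCoords (coordsSymm x) = x := by
  ext i
  fin_cases i <;> simp [symmCoords, coordsSymm, CharTwo.add_cancel_right]

theorem coordsSymm_symmCoords {A : Matrix (Fin 3) (Fin 3) (ZMod 2)} (hA : A.IsSymm) :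
    coordsSymm (symmCoords A) = A := by
  ext i j
  fin_cases i <;> fin_cases j <;>
    simp [symmCoords, coordsSymm, hA.apply 0 1, hA.apply 0 2, hA.apply 1 2,
      CharTwo.add_cancel_right]

theorem hypQ6_symmCoords_add_symmCoords {A B : Matrix (Fin 3) (Fin 3) (ZMod 2)}
    (hA : A.IsSymm) (hB : B.IsSymm) :
    hypQ6 (symmCoords A + symmCoords B) = (A + B).det := by
  rw [det_fin_three_of_isSymm_of_charTwo (hA.add hB)]
  simp only [ZMod.pow_card, hypQ6, symmCoords, Pi.add_apply, Matrix.add_apply, cons_val_zero,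
    cons_val_one, cons_val]
  linear_combination (A 0 0 * A 1 1 * A 2 2 + B 0 0 * B 1 1 * B 2 2) *
    CharTwo.two_eq_zero (R := ZMod 2)

theorem hypQ6_symmCoords {A : Matrix (Fin 3) (Fin 3) (ZMod 2)} (hA : A.IsSymm) :
    hypQ6 (symmCoords A) = A.det := by
  simpa [symmCoords] using hypQ6_symmCoords_add_symmCoords hA (isSymm_zero (α := ZMod 2))

theorem det_coordsSymm (x : Fin 6 → ZMod 2) : (coordsSymm x).det = hypQ6 x := by
  rw [← hypQ6_symmCoords (isSymm_coordsSymm x), symmCoords_coordsSymm]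

theorem det_coordsSymm_add_coordsSymm (x y : Fin 6 → ZMod 2) :
    (coordsSymm x + coordsSymm y).det = hypQ6 (x + y) := by
  rw [← hypQ6_symmCoords_add_symmCoords (isSymm_coordsSymm x) (isSymm_coordsSymm y),
    symmCoords_coordsSymm, symmCoords_coordsSymm]

theorem coordsSymm_injective : Function.Injective coordsSymm :=
  Function.LeftInverse.injective symmCoords_coordsSymm

noncomputable def no6IsoNM : NO6 ≃g NM where
  toFun v := ⟨coordsSymm v, isSymm_coordsSymm v, by simp [det_coordsSymm, v.2]⟩
  invFun A := ⟨symmCoords A, by rw [hypQ6_symmCoords A.2.1]; exact Fin.eq_one_of_ne_zero _ A.2.2⟩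
  left_inv v := Subtype.ext (symmCoords_coordsSymm v)
  right_inv A := Subtype.ext (coordsSymm_symmCoords A.2.1)
  map_rel_iff' {u v} := by
    dsimp only [NM, NO6, Equiv.coe_fn_mk]
    rw [det_coordsSymm_add_coordsSymm]
    simp [Subtype.ext_iff, coordsSymm_injective.eq_iff]

/-- The graphs `NO⁺(6,2)` and `NM` are isomorphic. -/
theorem NO6_iso_NM : Nonempty (NO6 ≃g NM) :=
  ⟨no6IsoNM⟩
end

section
/- Let F be a finite field with q elements. The number of nonzero singular symmetric 3×3 matrices over F is (q−1)(q²+1)(q²+q+1). (Equivalently, the secant variety M³₄ of the Veronese surface in PG(5,q) has (q²+1)(q²+q+1) points, the same number as the hyperbolic quadric Q⁺(5,q).) -/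
/-!
Write a symmetric matrix as `!![A, p; pᵀ, c]` with `A = !![a, d; d, b]`. Its determinant is
`det A * c - pᵀ (adj A) p`. If `A = 0` every `(p, c)` gives a singular matrix (`q³` of them).
Otherwise exactly `q²` pairs do: if `det A ≠ 0` then `c` is determined by `p`; if `det A = 0`
then `a * pᵀ (adj A) p = (a p₂ - d p₁)²` (or the symmetric identity with `b`), so the form
vanishes on a line of `q` points and `c` is free. Hence there are `q³ + (q³ - 1) q²` singular
symmetric matrices, and `(q³ - 1)(q² + 1)` nonzero ones.
-/

open scoped Classical

section Counting

variable {α β : Type*}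

theorem Nat.card_subtype_ne_and_add_one [Finite α] {p : α → Prop} {a : α} (ha : p a) :
    Nat.card {x // x ≠ a ∧ p x} + 1 = Nat.card {x // p x} :=
  calc Nat.card {x // x ≠ a ∧ p x} + 1 = ({x | p x} \ {a}).ncard + 1 := by
        rw [← Nat.card_coe_set_eq]
        exact congrArg (· + 1) (Nat.card_congr (Equiv.subtypeEquivRight fun x => and_comm))
    _ = Nat.card {x // p x} := Set.ncard_sdiff_singleton_add_one ha (Set.toFinite _)

theorem Nat.card_subtype_prod [Fintype α] [Finite β] (p : α → β → Prop) :
    Nat.card {x : α × β // p x.1 x.2} = ∑ a, Nat.card {b // p a b} := by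
  rw [Nat.card_congr (Equiv.subtypeProdEquivSigmaSubtype p), Nat.card_sigma]

theorem Nat.card_subtype_snd_eq (g : α → β) :
    Nat.card {x : α × β // x.2 = g x.1} = Nat.card α :=
  Nat.card_congr
    { toFun := fun x => x.1.1
      invFun := fun a => ⟨(a, g a), rfl⟩
      left_inv := by rintro ⟨⟨a, b⟩, rfl : b = g a⟩; rfl
      right_inv := fun _ => rfl }

theorem Nat.card_subtype_fst (p : α → Prop) :
    Nat.card {x : α × β // p x.1} = Nat.card {a // p a} * Nat.card β := by
  rw [Nat.card_congr Equiv.prodSubtypeFstEquivSubtypeProd, Nat.card_prod]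

end Counting

section SymmetricMatrix

variable {α R : Type*}

def symmetricMatrixEquiv :
    (α × α × α) × (α × α) × α ≃ {M : Matrix (Fin 3) (Fin 3) α // M.IsSymm} where
  toFun x := ⟨!![x.1.1, x.1.2.2, x.2.1.1; x.1.2.2, x.1.2.1, x.2.1.2; x.2.1.1, x.2.1.2, x.2.2], by
    ext i j; fin_cases i <;> fin_cases j <;> rfl⟩
  invFun M := ((M.1 0 0, M.1 1 1, M.1 0 1), (M.1 0 2, M.1 1 2), M.1 2 2)
  left_inv _ := rfl
  right_inv := by
    rintro ⟨M, hM⟩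
    ext i j
    fin_cases i <;> fin_cases j <;> simp [hM.apply 0 1, hM.apply 0 2, hM.apply 1 2]

theorem symmetricMatrixEquiv_apply_coe (x : (α × α × α) × (α × α) × α) :
    (symmetricMatrixEquiv x).1 =
      !![x.1.1, x.1.2.2, x.2.1.1; x.1.2.2, x.1.2.1, x.2.1.2; x.2.1.1, x.2.1.2, x.2.2] :=
  rfl

variable [CommRing R]

def blockDet (w : R × R × R) : R :=
  w.1 * w.2.1 - w.2.2 ^ 2

/-- `pᵀ (adj A) p` for the block `A = !![a, d; d, b]` encoded by `w = (a, b, d)`. -/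
def adjugateForm (w : R × R × R) (p : R × R) : R :=
  w.2.1 * p.1 ^ 2 - 2 * w.2.2 * p.1 * p.2 + w.1 * p.2 ^ 2

theorem det_symmetricMatrixEquiv (w : R × R × R) (p : R × R) (c : R) :
    (symmetricMatrixEquiv (w, p, c)).1.det = blockDet w * c - adjugateForm w p := by
  rw [symmetricMatrixEquiv_apply_coe, Matrix.det_fin_three]
  simp only [blockDet, adjugateForm, Matrix.of_apply, Matrix.cons_val', Matrix.cons_val_zero,
    Matrix.cons_val_one, Matrix.cons_val_two, Matrix.empty_val', Matrix.cons_val_fin_one,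
    Matrix.head_cons, Matrix.tail_cons, Matrix.head_fin_const]
  ring

theorem adjugateForm_swap (a b d : R) (p : R × R) :
    adjugateForm (a, b, d) p.swap = adjugateForm (b, a, d) p := by
  simp only [adjugateForm, Prod.fst_swap, Prod.snd_swap]
  ring

end SymmetricMatrix

section FiniteField

variable {F : Type*} [Field F]

theorem adjugateForm_eq_zero_iff {a b d : F} (ha : a ≠ 0) (h : blockDet (a, b, d) = 0)
    (p : F × F) : adjugateForm (a, b, d) p = 0 ↔ p.2 = d * p.1 / a := by
  have hsq : a * adjugateForm (a, b, d) p = (a * p.2 - d * p.1) ^ 2 := by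
    simp only [blockDet, adjugateForm] at h ⊢
    linear_combination p.1 ^ 2 * h
  rw [← mul_eq_zero_iff_left ha, hsq, sq_eq_zero_iff, sub_eq_zero, eq_div_iff ha, mul_comm p.2]

theorem card_adjugateForm_eq_zero {w : F × F × F} (hw : w ≠ 0) (h : blockDet w = 0) :
    Nat.card {p // adjugateForm w p = 0} = Nat.card F := by
  obtain ⟨a, b, d⟩ := w
  have hab : a ≠ 0 ∨ b ≠ 0 := by
    by_contra! hab
    obtain ⟨rfl, rfl⟩ := hab
    have hd : d = 0 := by simpa [blockDet] using h
    exact hw (by simp [hd])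
  rcases hab with ha | hb
  · exact (Nat.card_congr (Equiv.subtypeEquivRight (adjugateForm_eq_zero_iff ha h))).trans
      (Nat.card_subtype_snd_eq fun e : F => d * e / a)
  · have h' : blockDet (b, a, d) = 0 := by simpa [blockDet, mul_comm] using h
    calc Nat.card {p // adjugateForm (a, b, d) p = 0}
        = Nat.card {p // adjugateForm (b, a, d) p = 0} :=
          Nat.card_congr ((Equiv.prodComm F F).subtypeEquiv fun p => by
            rw [Equiv.prodComm_apply, adjugateForm_swap])
      _ = Nat.card F :=
          (Nat.card_congr (Equiv.subtypeEquivRight (adjugateForm_eq_zero_iff hb h'))).trans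
            (Nat.card_subtype_snd_eq fun e : F => d * e / b)

theorem card_blockDet_mul_sub_adjugateForm_eq_zero (w : F × F × F) :
    Nat.card {y : (F × F) × F // blockDet w * y.2 - adjugateForm w y.1 = 0} =
      if w = 0 then Nat.card F ^ 3 else Nat.card F ^ 2 := by
  split_ifs with hw
  · subst hw
    have hall (y : (F × F) × F) : blockDet 0 * y.2 - adjugateForm 0 y.1 = 0 := by
      simp [blockDet, adjugateForm]
    rw [Nat.card_congr (Equiv.subtypeUnivEquiv hall), Nat.card_prod, Nat.card_prod]
    ring
  by_cases hu : blockDet w = 0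
  · simp only [hu, zero_mul, zero_sub, neg_eq_zero]
    rw [Nat.card_subtype_fst (β := F) fun p : F × F => adjugateForm w p = 0,
      card_adjugateForm_eq_zero hw hu, sq]
  · have hc (y : (F × F) × F) : blockDet w * y.2 - adjugateForm w y.1 = 0 ↔
        y.2 = adjugateForm w y.1 / blockDet w := by
      rw [sub_eq_zero, eq_div_iff hu, mul_comm]
    rw [Nat.card_congr (Equiv.subtypeEquivRight hc),
      Nat.card_subtype_snd_eq fun p : F × F => adjugateForm w p / blockDet w, Nat.card_prod, sq]

variable [Fintype F]

theorem card_isSymm_det_eq_zero :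
    Nat.card {M : Matrix (Fin 3) (Fin 3) F // M.IsSymm ∧ M.det = 0} =
      Nat.card F ^ 3 + (Nat.card F ^ 3 - 1) * Nat.card F ^ 2 := by
  calc Nat.card {M : Matrix (Fin 3) (Fin 3) F // M.IsSymm ∧ M.det = 0}
      = Nat.card {x : (F × F × F) × (F × F) × F //
          blockDet x.1 * x.2.2 - adjugateForm x.1 x.2.1 = 0} :=
        Nat.card_congr ((Equiv.subtypeSubtypeEquivSubtypeInter _ _).symm.trans
          (symmetricMatrixEquiv.subtypeEquiv fun x => by
            rw [← det_symmetricMatrixEquiv]).symm)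
    _ = ∑ w : F × F × F,
          Nat.card {y : (F × F) × F // blockDet w * y.2 - adjugateForm w y.1 = 0} :=
        Nat.card_subtype_prod fun (w : F × F × F) (y : (F × F) × F) =>
          blockDet w * y.2 - adjugateForm w y.1 = 0
    _ = ∑ w : F × F × F, if w = 0 then Nat.card F ^ 3 else Nat.card F ^ 2 := by
        simp only [card_blockDet_mul_sub_adjugateForm_eq_zero]
    _ = Nat.card F ^ 3 + (Nat.card F ^ 3 - 1) * Nat.card F ^ 2 := by
        rw [Fintype.sum_eq_add_sum_compl 0, if_pos rfl,
          Finset.sum_ite_of_false fun w hw => Finset.mem_compl.1 hw ∘ Finset.mem_singleton.2,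
          Finset.sum_const, Finset.card_compl, Finset.card_singleton, smul_eq_mul,
          Fintype.card_eq_nat_card, Nat.card_prod, Nat.card_prod, ← pow_three]

end FiniteField

/-- Over a finite field `F` with `q` elements, the number of nonzero singular symmetric
`3 × 3` matrices is `(q−1)(q²+1)(q²+q+1)`: the secant variety `M³₄` of the Veronese
surface in `PG(5,q)` has `(q²+1)(q²+q+1)` points. -/
theorem card_secant_variety (F : Type*) [Field F] [Fintype F] :
    Fintype.card {M : Matrix (Fin 3) (Fin 3) F // M.IsSymm ∧ M ≠ 0 ∧ M.det = 0} =
      (Fintype.card F - 1) * (Fintype.card F ^ 2 + 1) *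
        (Fintype.card F ^ 2 + Fintype.card F + 1) := by
  have hcount := Nat.card_subtype_ne_and_add_one
    (p := fun M : Matrix (Fin 3) (Fin 3) F => M.IsSymm ∧ M.det = 0)
    ⟨Matrix.isSymm_zero, Matrix.det_zero⟩
  rw [card_isSymm_det_eq_zero] at hcount
  simp only [Fintype.card_eq_nat_card]
  rw [Nat.card_congr (Equiv.subtypeEquivRight fun M => and_left_comm)]
  have hq : 1 ≤ Nat.card F := Nat.card_pos
  have hq3 : 1 ≤ Nat.card F ^ 3 := Nat.one_le_pow _ _ hq
  zify [hq, hq3] at hcount ⊢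
  linear_combination hcount
end

section
/- Let F be a finite field with q elements. The number of invertible symmetric 3×3 matrices over F is (q−1)(q⁵−q²). (Equivalently, the orbit O₄ of non-degenerate conics of PG(2,q) has q⁵−q² elements.) -/
open scoped Classical

/-!
Write a symmetric matrix as `[[a, d, e], [d, b, f], [e, f, c]]`. Its determinant is
`(ab - d²) c - (a f² - 2 d e f + b e²)`, an affine function of `c`. It vanishes identically when
`(a, b, d) = 0`. If `ab ≠ d²`, then for each `(e, f)` exactly one of the `q` values of `c` makes it
vanish. If `ab = d²` but `(a, b, d) ≠ 0`, the quadratic part is a nonzero multiple of the square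
of a nonzero linear form in `(e, f)`, which vanishes on `q` of the `q²` pairs. Either way each
of the `q³ - 1` nonzero triples `(a, b, d)` leaves `q² (q - 1)` triples `(e, f, c)`.
-/

open Finset

theorem Finset.card_filter_univ_prod {α β : Type*} [Fintype α] [Fintype β] (P : α × β → Prop)
    [DecidablePred P] : #{v | P v} = ∑ a, #{b | P (a, b)} := by
  simp only [card_filter, Fintype.sum_prod_type]

section SymmMatrix

variable {R : Type*}

def symmMatrixOfEntries : (R × R × R) × (R × R) × R → Matrix (Fin 3) (Fin 3) R
  | ((a, b, d), (e, f), c) => !![a, d, e; d, b, f; e, f, c]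

theorem isSymm_symmMatrixOfEntries (v : (R × R × R) × (R × R) × R) :
    (symmMatrixOfEntries v).IsSymm := by
  obtain ⟨⟨a, b, d⟩, ⟨e, f⟩, c⟩ := v
  ext i j
  fin_cases i <;> fin_cases j <;> rfl

def symmMatrixEquiv :
    {M : Matrix (Fin 3) (Fin 3) R // M.IsSymm} ≃ (R × R × R) × (R × R) × R where
  toFun M := ((M.1 0 0, M.1 1 1, M.1 0 1), (M.1 0 2, M.1 1 2), M.1 2 2)
  invFun v := ⟨symmMatrixOfEntries v, isSymm_symmMatrixOfEntries v⟩
  left_inv := fun ⟨M, hM⟩ => by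
    ext i j
    fin_cases i <;> fin_cases j <;>
      simp [symmMatrixOfEntries, ← hM.apply 0 1, ← hM.apply 0 2, ← hM.apply 1 2]
  right_inv _ := rfl

theorem det_symmMatrixOfEntries [CommRing R] (a b d e f c : R) :
    (symmMatrixOfEntries ((a, b, d), (e, f), c)).det =
      (a * b - d ^ 2) * c - (a * f ^ 2 + b * e ^ 2 - 2 * d * e * f) := by
  simp only [symmMatrixOfEntries, Matrix.det_fin_three, Matrix.of_apply, Matrix.cons_val',
    Matrix.cons_val_zero, Matrix.cons_val_fin_one, Matrix.cons_val_one, Matrix.cons_val]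
  ring

end SymmMatrix

section Count

variable {F : Type*} [Field F] [Fintype F]

theorem card_filter_mul_sub_ne_zero {α : F} (hα : α ≠ 0) (β : F) :
    #{x | α * x - β ≠ 0} = Fintype.card F - 1 := by
  have hsolve : ∀ x, α * x - β ≠ 0 ↔ x ≠ β / α := fun x => by
    rw [not_iff_not, sub_eq_zero, eq_div_iff hα, mul_comm]
  simp_rw [hsolve, filter_ne', card_erase_of_mem (mem_univ _), card_univ]

theorem card_filter_degenerate_quadratic_ne_zero {a b d : F} (hdisc : a * b = d ^ 2)
    (hne : (a, b, d) ≠ 0) :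
    #{v : F × F | a * v.2 ^ 2 + b * v.1 ^ 2 - 2 * d * v.1 * v.2 ≠ 0} =
      Fintype.card F * (Fintype.card F - 1) := by
  by_cases ha : a = 0
  · have hd : d = 0 := by simpa [ha] using hdisc.symm
    have hb : b ≠ 0 := by rintro rfl; exact hne (by simp [ha, hd])
    calc _ = #{v : F × F | v.1 ≠ 0} := by congr 1; ext v; simp [ha, hd, hb]
      _ = _ := by
        rw [← univ_product_univ, filter_product_left (fun x : F => x ≠ 0), card_product,
          filter_ne', card_erase_of_mem (mem_univ _), card_univ, mul_comm]
  · have hsq : ∀ e f : F, a * (a * f ^ 2 + b * e ^ 2 - 2 * d * e * f) = (a * f - d * e) ^ 2 :=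
      fun e f => by linear_combination e ^ 2 * hdisc
    have hlin : ∀ v : F × F, a * v.2 ^ 2 + b * v.1 ^ 2 - 2 * d * v.1 * v.2 ≠ 0 ↔
        a * v.2 - d * v.1 ≠ 0 := fun v => by
      rw [← pow_ne_zero_iff (a := a * v.2 - d * v.1) two_ne_zero, ← hsq, mul_ne_zero_iff,
        and_iff_right ha]
    rw [filter_congr fun v _ => hlin v]
    simp_rw [card_filter_univ_prod, card_filter_mul_sub_ne_zero ha, sum_const, card_univ,
      smul_eq_mul]

theorem card_filter_det_symmMatrixOfEntries_mk_ne_zero {p : F × F × F} (hp : p ≠ 0) :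
    #{w | (symmMatrixOfEntries (p, w)).det ≠ 0} = Fintype.card F ^ 2 * (Fintype.card F - 1) := by
  obtain ⟨a, b, d⟩ := p
  by_cases hdisc : a * b = d ^ 2
  · calc _ = #(({v | a * v.2 ^ 2 + b * v.1 ^ 2 - 2 * d * v.1 * v.2 ≠ 0} : Finset (F × F)) ×ˢ
            (univ : Finset F)) := by
          congr 1; ext ⟨⟨e, f⟩, c⟩
          simp only [mem_filter, mem_product, mem_univ, true_and, and_true,
            det_symmMatrixOfEntries, hdisc, sub_self, zero_mul, zero_sub, neg_ne_zero]
      _ = _ := by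
        rw [card_product, card_filter_degenerate_quadratic_ne_zero hdisc hp, card_univ]
        ring
  · simp_rw [card_filter_univ_prod, Fintype.sum_prod_type, det_symmMatrixOfEntries,
      card_filter_mul_sub_ne_zero (sub_ne_zero.mpr hdisc), sum_const, card_univ, smul_eq_mul]
    ring

theorem card_filter_det_symmMatrixOfEntries_ne_zero :
    #{v : (F × F × F) × (F × F) × F | (symmMatrixOfEntries v).det ≠ 0} =
      (Fintype.card F ^ 3 - 1) * (Fintype.card F ^ 2 * (Fintype.card F - 1)) := by
  have hzero : ∀ w, (symmMatrixOfEntries ((0 : F × F × F), w)).det = 0 := fun ⟨⟨e, f⟩, c⟩ =>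
    (det_symmMatrixOfEntries 0 0 0 e f c).trans (by ring)
  rw [card_filter_univ_prod, ← sum_erase_add _ _ (mem_univ 0)]
  simp only [hzero, ne_eq, not_true_eq_false, filter_false, card_empty, add_zero]
  rw [sum_congr rfl fun p hp => card_filter_det_symmMatrixOfEntries_mk_ne_zero
    (ne_of_mem_erase hp), sum_const, card_erase_of_mem (mem_univ _), card_univ, smul_eq_mul]
  rw [show Fintype.card (F × F × F) = Fintype.card F ^ 3 by simp only [Fintype.card_prod]; ring]

end Count

/-- Over a finite field `F` with `q` elements, the number of invertible symmetric `3 × 3`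
matrices is `(q−1)(q⁵−q²)`: the orbit `O₄` of non-degenerate conics of `PG(2,q)` has
`q⁵−q²` elements. -/
theorem card_invertible_symm (F : Type*) [Field F] [Fintype F] :
    Fintype.card {M : Matrix (Fin 3) (Fin 3) F // M.IsSymm ∧ IsUnit M.det} =
      (Fintype.card F - 1) * (Fintype.card F ^ 5 - Fintype.card F ^ 2) := by
  have hcard : Fintype.card {M : Matrix (Fin 3) (Fin 3) F // M.IsSymm ∧ IsUnit M.det} =
      #{v : (F × F × F) × (F × F) × F | (symmMatrixOfEntries v).det ≠ 0} := by
    rw [← Fintype.card_subtype]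
    exact Fintype.card_congr <| (Equiv.subtypeSubtypeEquivSubtypeInter _ _).symm.trans
      (symmMatrixEquiv.symm.subtypeEquiv fun _ => isUnit_iff_ne_zero.symm).symm
  have hpow : Fintype.card F ^ 5 - Fintype.card F ^ 2 =
      Fintype.card F ^ 2 * (Fintype.card F ^ 3 - 1) := by
    rw [Nat.mul_sub_one, ← pow_add]
  rw [hcard, card_filter_det_symmMatrixOfEntries_ne_zero, hpow]
  ring
end
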